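/- arXiv:2003.13110 — 6 statements merged into one kernel-verified Lean document; each statement's English description precedes it below -/
import Mathlib

section
/- Let L be a metabelian (right) Leibniz algebra over a field K of characteristic zero and let u ∈ L'. Then ψ_u is a Leibniz algebra endomorphism of L: it is K-linear and ψ_u([v,w]) = [ψ_u(v), ψ_u(w)] for all v, w ∈ L. -/
/-- Let `L` be a metabelian (right) Leibniz algebra over a field `K` of
characteristic zero and let `u ∈ L'` (the span of all brackets). Then
`ψ_u : v ↦ v + [v,u]` is a Leibniz algebra endomorphism of `L`: it is
`K`-linear and `ψ_u([v,w]) = [ψ_u(v), ψ_u(w)]` for all `v, w ∈ L`. -/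
theorem inner_map_is_endomorphism
    {K L : Type*} [Field K] [CharZero K] [AddCommGroup L] [Module K L]
    (b : L →ₗ[K] L →ₗ[K] L)
    (leib : ∀ x y z : L, b (b x y) z = b (b x z) y + b x (b y z))
    (metab : ∀ x y z t : L, b (b x y) (b z t) = 0)
    (u : L) (hu : u ∈ Submodule.span K {a : L | ∃ x y : L, a = b x y}) :
    (∀ v w : L, (v + w) + b (v + w) u = (v + b v u) + (w + b w u)) ∧
    (∀ (k : K) (v : L), (k • v) + b (k • v) u = k • (v + b v u)) ∧
    (∀ v w : L, b v w + b (b v w) u = b (v + b v u) (w + b w u)) := by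
  refine ⟨fun v w => ?_, fun k v => ?_, fun v w => ?_⟩
  · simp [map_add]; abel
  · simp [map_smul, smul_add]
  · simp only [map_add, LinearMap.add_apply, metab v u w u, add_zero, leib v w u]
    abel
end

section
/- Let L be a metabelian (right) Leibniz algebra over a field K of characteristic zero and let u_1, u_2 ∈ L'. Then ψ_{u_1}(ψ_{u_2}(v)) = ψ_{u_1+u_2}(v) for all v ∈ L; in particular each ψ_u (u ∈ L') is bijective with inverse ψ_{-u}, and the inner automorphisms {ψ_u : u ∈ L'} form an abelian group under composition. -/
/-- Let `L` be a metabelian (right) Leibniz algebra over a field `K` of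
characteristic zero and `u₁, u₂ ∈ L'`. Then `ψ_{u₁} ∘ ψ_{u₂} = ψ_{u₁+u₂}`
(where `ψ_u(v) = v + [v,u]`); in particular each `ψ_u` is bijective with
inverse `ψ_{-u}`, and the inner automorphisms commute under composition. -/
theorem inner_automorphisms_compose_add
    {K L : Type*} [Field K] [CharZero K] [AddCommGroup L] [Module K L]
    (b : L →ₗ[K] L →ₗ[K] L)
    (leib : ∀ x y z : L, b (b x y) z = b (b x z) y + b x (b y z))
    (metab : ∀ x y z t : L, b (b x y) (b z t) = 0)
    (u₁ u₂ : L)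
    (hu₁ : u₁ ∈ Submodule.span K {a : L | ∃ x y : L, a = b x y})
    (hu₂ : u₂ ∈ Submodule.span K {a : L | ∃ x y : L, a = b x y}) :
    (∀ v : L, (v + b v u₂) + b (v + b v u₂) u₁ = v + b v (u₁ + u₂)) ∧
    Function.Bijective (fun v : L => v + b v u₁) ∧
    (∀ v : L, ((v + b v u₁) + b (v + b v u₁) (-u₁) = v) ∧
      ((v + b v (-u₁)) + b (v + b v (-u₁)) u₁ = v)) ∧
    (∀ v : L, (v + b v u₂) + b (v + b v u₂) u₁ =
      (v + b v u₁) + b (v + b v u₁) u₂) := by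
  -- key: b (b x y) w = 0 for all w in the span of commutators
  have key : ∀ (x y w : L), w ∈ Submodule.span K {a : L | ∃ x y : L, a = b x y} →
      b (b x y) w = 0 := by
    intro x y w hw
    induction hw using Submodule.span_induction with
    | mem a ha =>
        obtain ⟨z, t, rfl⟩ := ha
        exact metab x y z t
    | zero => simp
    | add a c _ _ ha hc => rw [map_add, ha, hc, add_zero]
    | smul k a _ ha => rw [map_smul, ha, smul_zero]
  have inv1 : ∀ v : L, (v + b v u₁) + b (v + b v u₁) (-u₁) = v := by
    intro v
    simp only [map_add, map_neg, LinearMap.add_apply, LinearMap.neg_apply,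
      key v u₁ u₁ hu₁]
    abel
  have inv2 : ∀ v : L, (v + b v (-u₁)) + b (v + b v (-u₁)) u₁ = v := by
    intro v
    simp only [map_add, map_neg, LinearMap.add_apply, LinearMap.neg_apply,
      key v u₁ u₁ hu₁]
    abel
  refine ⟨?_, ?_, fun v => ⟨inv1 v, inv2 v⟩, ?_⟩
  · intro v
    simp only [map_add, LinearMap.add_apply, key v u₂ u₁ hu₁]
    abel
  · exact ⟨Function.LeftInverse.injective
      (g := fun v : L => v + b v (-u₁)) fun x => inv1 x,
      fun y => ⟨y + b y (-u₁), inv2 y⟩⟩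
  · intro v
    simp only [map_add, LinearMap.add_apply, key v u₂ u₁ hu₁, key v u₁ u₂ hu₂]
    abel
end

section
/- Let K be a field of characteristic zero, n ≥ 2, and let p : Fin n → MvPolynomial (Fin n) K be a family of polynomials. Then the equivariance condition 'rename σ (p i) = p (σ i) for every σ ∈ Equiv.Perm (Fin n) and every i' holds if and only if: (a) rename π (p 0) = p 0 for every permutation π fixing 0; (b) rename π (p i) = p i for every i and every permutation π fixing i; and (c) p i = rename (Equiv.swap 0 i) (p 0) for every i. (This is the characterization of the symmetric polynomials of the form Σ_i [x_i,x_i]·p_i(r_1,…,r_n) in the free metabelian Leibniz algebra L_n.) -/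
open MvPolynomial

/-- Characterization of the equivariant families of coefficients
`p : Fin n → MvPolynomial (Fin n) K` (corresponding to the symmetric polynomials
of the form `Σ_i [x_i,x_i]·p_i(r_1,…,r_n)` in the free metabelian Leibniz
algebra `L_n`): the equivariance `rename σ (p i) = p (σ i)` for all `σ, i`
holds iff (a) `rename π (p 0) = p 0` for every `π` fixing `0`;
(b) `rename π (p i) = p i` for every `i` and every `π` fixing `i`; and
(c) `p i = rename (Equiv.swap 0 i) (p 0)` for every `i`. -/
theorem symmetric_diagonal_coefficients_characterization
    {K : Type*} [Field K] [CharZero K] {n : ℕ} [NeZero n] (hn : 2 ≤ n)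
    (p : Fin n → MvPolynomial (Fin n) K) :
    (∀ (σ : Equiv.Perm (Fin n)) (i : Fin n), rename σ (p i) = p (σ i)) ↔
      ((∀ π : Equiv.Perm (Fin n), π 0 = 0 → rename π (p 0) = p 0) ∧
       (∀ (i : Fin n) (π : Equiv.Perm (Fin n)), π i = i → rename π (p i) = p i) ∧
       (∀ i : Fin n, p i = rename (Equiv.swap 0 i) (p 0))) := by
  constructor
  · intro h
    refine ⟨fun π hπ => by rw [h π 0, hπ], fun i π hπ => by rw [h π i, hπ],
      fun i => by rw [h (Equiv.swap 0 i) 0, Equiv.swap_apply_left]⟩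
  · rintro ⟨ha, hb, hc⟩ σ i
    have key : ∀ (τ : Equiv.Perm (Fin n)) (j : Fin n), τ 0 = j →
        rename τ (p 0) = p j := by
      intro τ j hτ
      have : p j = rename (Equiv.swap 0 j) (p 0) := hc j
      rw [this]
      have h2 : rename (Equiv.swap 0 j) (rename ((Equiv.swap 0 j)⁻¹ * τ) (p 0))
          = rename τ (p 0) := by
        rw [rename_rename]
        congr 1
        ext x
        simp [Equiv.Perm.mul_apply]
      rw [← h2, ha ((Equiv.swap 0 j)⁻¹ * τ) (by simp [Equiv.Perm.mul_apply, hτ])]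
    have hpi : p i = rename (Equiv.swap 0 i) (p 0) := hc i
    rw [hpi, rename_rename]
    exact key (σ * Equiv.swap 0 i) (σ i) (by simp [Equiv.Perm.mul_apply])
end

section
/- The bracket on the concrete model M_n is K-bilinear, satisfies the Leibniz identity [[x,y],z] = [[x,z],y] + [x,[y,z]] and the metabelian identity [[x,y],[z,t]] = 0 for all x,y,z,t ∈ M_n, and every σ ∈ Equiv.Perm (Fin n) acts on M_n as a bracket-preserving K-linear automorphism. -/
open MvPolynomial

/-- The concrete model `M_n` of the free metabelian Leibniz algebra `L_n`:
`(α, P)` represents `Σ_i α_i x_i + Σ_{(i,j)} [x_i,x_j]·P(i,j)(r_1,…,r_n)`. -/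
noncomputable def lbBracket {K : Type*} [Field K] {n : ℕ}
    (v w : (Fin n → K) × (Fin n × Fin n → MvPolynomial (Fin n) K)) :
    (Fin n → K) × (Fin n × Fin n → MvPolynomial (Fin n) K) :=
  (0, fun p =>
    C (v.1 p.1 * w.1 p.2)
      + v.2 p * (∑ k, C (w.1 k) * X k)
      + C (v.1 p.1) * (∑ k, (w.2 (p.2, k) - w.2 (k, p.2)) * X k))

/-- The action of `σ ∈ Equiv.Perm (Fin n)` on the model `M_n`, corresponding to
the substitution `x_i ↦ x_{σ(i)}`. -/
noncomputable def permAct {K : Type*} [Field K] {n : ℕ} (σ : Equiv.Perm (Fin n))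
    (v : (Fin n → K) × (Fin n × Fin n → MvPolynomial (Fin n) K)) :
    (Fin n → K) × (Fin n × Fin n → MvPolynomial (Fin n) K) :=
  (v.1 ∘ ⇑σ⁻¹, fun p => rename ⇑σ (v.2 (σ⁻¹ p.1, σ⁻¹ p.2)))

/-!
Writing the `(s, t)` component of `[v, w]` as
`α_s β_t + P(s,t) · linearForm β + α_s · skewPart Q t`, bilinearity is immediate. A bracket has
zero linear part, so in `[[x,y],z]` only the middle term survives and `[x,[y,z]]` reduces to
`skewPart` of a bracket; the Leibniz identity then comes down to
`Σ_t skewPart Q t · X_t = 0`, an antisymmetric tensor contracted against a symmetric one.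
For the same reason `[[x,y],[z,t]] = 0`. The permutation action is renaming of variables, an
algebra automorphism, which commutes with both `linearForm` and `skewPart` after reindexing
the sums by `σ`.
-/

namespace MetabelianLeibniz

abbrev Model (K : Type*) [CommSemiring K] (n : ℕ) :=
  (Fin n → K) × (Fin n × Fin n → MvPolynomial (Fin n) K)

section LinearForm

variable {R : Type*} [CommSemiring R] {n : ℕ}

/-- The polynomial `Σ_k β_k r_k` by which `Σ_k β_k x_k` acts on the commutator ideal. -/
noncomputable def linearForm (β : Fin n → R) : MvPolynomial (Fin n) R :=
  ∑ k, C (β k) * X k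

theorem linearForm_zero : linearForm (0 : Fin n → R) = 0 := by
  simp [linearForm]

theorem linearForm_add (β β' : Fin n → R) :
    linearForm (β + β') = linearForm β + linearForm β' := by
  simp only [linearForm, Pi.add_apply, map_add, add_mul, Finset.sum_add_distrib]

theorem linearForm_smul (c : R) (β : Fin n → R) :
    linearForm (c • β) = C c * linearForm β := by
  simp only [linearForm, Pi.smul_apply, smul_eq_mul, map_mul, Finset.mul_sum, mul_assoc]

theorem linearForm_comp_symm (σ : Equiv.Perm (Fin n)) (β : Fin n → R) :
    linearForm (β ∘ ⇑σ⁻¹) = rename ⇑σ (linearForm β) := by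
  simp only [linearForm, map_sum, map_mul, rename_C, rename_X]
  exact Fintype.sum_equiv σ⁻¹ _ _ fun k => by simp

end LinearForm

section SkewPart

variable {R : Type*} [CommRing R] {n : ℕ}

/-- `[x_s, (0, Q)] = Σ_t [x_s, x_t] · skewPart Q t`: by the Leibniz identity,
`[x_s, [x_i, x_j]] = [x_s, x_i] r_j - [x_s, x_j] r_i`. -/
noncomputable def skewPart (Q : Fin n × Fin n → MvPolynomial (Fin n) R) (t : Fin n) :
    MvPolynomial (Fin n) R :=
  ∑ k, (Q (t, k) - Q (k, t)) * X k

theorem skewPart_add (Q Q' : Fin n × Fin n → MvPolynomial (Fin n) R) (t : Fin n) :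
    skewPart (Q + Q') t = skewPart Q t + skewPart Q' t := by
  simp only [skewPart, ← Finset.sum_add_distrib, Pi.add_apply]
  exact Finset.sum_congr rfl fun k _ => by ring

theorem skewPart_smul (c : R) (Q : Fin n × Fin n → MvPolynomial (Fin n) R) (t : Fin n) :
    skewPart (c • Q) t = C c * skewPart Q t := by
  simp only [skewPart, Finset.mul_sum, Pi.smul_apply, smul_eq_C_mul]
  exact Finset.sum_congr rfl fun k _ => by ring

theorem skewPart_rename (σ : Equiv.Perm (Fin n)) (Q : Fin n × Fin n → MvPolynomial (Fin n) R)
    (t : Fin n) :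
    skewPart (fun p => rename ⇑σ (Q (σ⁻¹ p.1, σ⁻¹ p.2))) t = rename ⇑σ (skewPart Q (σ⁻¹ t)) := by
  simp only [skewPart, map_sum, map_mul, map_sub, rename_X]
  exact Fintype.sum_equiv σ⁻¹ _ _ fun k => by simp

theorem sum_skewPart_mul_X (Q : Fin n × Fin n → MvPolynomial (Fin n) R) :
    ∑ t, skewPart Q t * X t = 0 := by
  simp only [skewPart, Finset.sum_mul, sub_mul, Finset.sum_sub_distrib]
  rw [Finset.sum_comm (f := fun t k => Q (k, t) * X k * X t), sub_eq_zero]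
  exact Fintype.sum_congr _ _ fun t => Fintype.sum_congr _ _ fun k => by ring

end SkewPart

section Bracket

variable {K : Type*} [Field K] {n : ℕ}

@[simp]
theorem lbBracket_fst (v w : Model K n) : (lbBracket v w).1 = 0 := rfl

theorem lbBracket_snd (v w : Model K n) (p : Fin n × Fin n) :
    (lbBracket v w).2 p
      = C (v.1 p.1 * w.1 p.2) + v.2 p * linearForm w.1 + C (v.1 p.1) * skewPart w.2 p.2 :=
  rfl

theorem lbBracket_add_left (v v' w : Model K n) :
    lbBracket (v + v') w = lbBracket v w + lbBracket v' w := by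
  refine Prod.ext (by simp) (funext fun p => ?_)
  simp only [Prod.snd_add, Prod.fst_add, Pi.add_apply, lbBracket_snd, add_mul, map_add]
  ring

theorem lbBracket_add_right (v w w' : Model K n) :
    lbBracket v (w + w') = lbBracket v w + lbBracket v w' := by
  refine Prod.ext (by simp) (funext fun p => ?_)
  simp only [Prod.snd_add, Prod.fst_add, Pi.add_apply, lbBracket_snd, mul_add, map_add,
    linearForm_add, skewPart_add]
  ring

theorem lbBracket_smul_left (c : K) (v w : Model K n) :
    lbBracket (c • v) w = c • lbBracket v w := by
  refine Prod.ext (by simp) (funext fun p => ?_)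
  simp only [Prod.smul_snd, Prod.smul_fst, Pi.smul_apply, lbBracket_snd, smul_eq_mul,
    smul_eq_C_mul, map_mul]
  ring

theorem lbBracket_smul_right (c : K) (v w : Model K n) :
    lbBracket v (c • w) = c • lbBracket v w := by
  refine Prod.ext (by simp) (funext fun p => ?_)
  simp only [Prod.smul_snd, Prod.smul_fst, Pi.smul_apply, lbBracket_snd, smul_eq_mul,
    smul_eq_C_mul, map_mul, linearForm_smul, skewPart_smul]
  ring

theorem skewPart_lbBracket (y z : Model K n) (t : Fin n) :
    skewPart (lbBracket y z).2 t
      = C (y.1 t) * linearForm z.1 - C (z.1 t) * linearForm y.1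
        + skewPart y.2 t * linearForm z.1 - skewPart z.2 t * linearForm y.1 := by
  calc skewPart (lbBracket y z).2 t
      = ∑ k, (C (y.1 t) * (C (z.1 k) * X k) - C (z.1 t) * (C (y.1 k) * X k)
          + (y.2 (t, k) - y.2 (k, t)) * X k * linearForm z.1
          - skewPart z.2 t * (C (y.1 k) * X k)
          + C (y.1 t) * (skewPart z.2 k * X k)) :=
        Finset.sum_congr rfl fun k _ => by
          rw [lbBracket_snd, lbBracket_snd, map_mul, map_mul]
          ring
    _ = _ := by
        simp only [Finset.sum_add_distrib, Finset.sum_sub_distrib, ← Finset.mul_sum,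
          ← Finset.sum_mul, sum_skewPart_mul_X, mul_zero, add_zero]
        rfl

theorem lbBracket_leibniz (x y z : Model K n) :
    lbBracket (lbBracket x y) z = lbBracket (lbBracket x z) y + lbBracket x (lbBracket y z) := by
  refine Prod.ext (by simp) (funext fun p => ?_)
  simp only [Prod.snd_add, Pi.add_apply, lbBracket_snd, lbBracket_fst, skewPart_lbBracket,
    linearForm_zero, Pi.zero_apply, zero_mul, mul_zero, map_zero, map_mul]
  ring

theorem lbBracket_eq_zero_of_fst_eq_zero {v w : Model K n} (hv : v.1 = 0) (hw : w.1 = 0) :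
    lbBracket v w = 0 := by
  refine Prod.ext rfl (funext fun p => ?_)
  simp [lbBracket_snd, hv, hw, linearForm_zero]

theorem lbBracket_lbBracket_lbBracket (x y z t : Model K n) :
    lbBracket (lbBracket x y) (lbBracket z t) = 0 :=
  lbBracket_eq_zero_of_fst_eq_zero (lbBracket_fst x y) (lbBracket_fst z t)

end Bracket

section Action

variable {K : Type*} [Field K] {n : ℕ}

theorem permAct_lbBracket (σ : Equiv.Perm (Fin n)) (v w : Model K n) :
    permAct σ (lbBracket v w) = lbBracket (permAct σ v) (permAct σ w) := by
  refine Prod.ext rfl (funext fun p => ?_)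
  simp only [permAct, lbBracket_snd, linearForm_comp_symm, skewPart_rename, map_add, map_mul,
    rename_C, Function.comp_apply]

theorem permAct_add (σ : Equiv.Perm (Fin n)) (v w : Model K n) :
    permAct σ (v + w) = permAct σ v + permAct σ w :=
  Prod.ext rfl (funext fun _ => map_add _ _ _)

theorem permAct_smul (σ : Equiv.Perm (Fin n)) (c : K) (v : Model K n) :
    permAct σ (c • v) = c • permAct σ v :=
  Prod.ext rfl (funext fun _ => (rename _).toLinearMap.map_smul _ _)

theorem permAct_one (v : Model K n) : permAct 1 v = v := by
  refine Prod.ext rfl (funext fun p => ?_)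
  simp [permAct, rename_id]

theorem permAct_permAct (σ τ : Equiv.Perm (Fin n)) (v : Model K n) :
    permAct σ (permAct τ v) = permAct (σ * τ) v := by
  refine Prod.ext rfl (funext fun p => ?_)
  simp [permAct, rename_rename, mul_inv_rev]

theorem permAct_bijective (σ : Equiv.Perm (Fin n)) :
    Function.Bijective (permAct σ : Model K n → Model K n) :=
  Function.bijective_iff_has_inverse.2 ⟨permAct σ⁻¹,
    fun v => by rw [permAct_permAct, inv_mul_cancel, permAct_one],
    fun v => by rw [permAct_permAct, mul_inv_cancel, permAct_one]⟩

end Action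

end MetabelianLeibniz

theorem model_is_metabelian_leibniz_with_symmetric_action_general
    {K : Type*} [Field K] {n : ℕ} :
    (∀ v w w' : (Fin n → K) × (Fin n × Fin n → MvPolynomial (Fin n) K),
      lbBracket v (w + w') = lbBracket v w + lbBracket v w') ∧
    (∀ (c : K) (v w : (Fin n → K) × (Fin n × Fin n → MvPolynomial (Fin n) K)),
      lbBracket v (c • w) = c • lbBracket v w) ∧
    (∀ v v' w : (Fin n → K) × (Fin n × Fin n → MvPolynomial (Fin n) K),
      lbBracket (v + v') w = lbBracket v w + lbBracket v' w) ∧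
    (∀ (c : K) (v w : (Fin n → K) × (Fin n × Fin n → MvPolynomial (Fin n) K)),
      lbBracket (c • v) w = c • lbBracket v w) ∧
    (∀ x y z : (Fin n → K) × (Fin n × Fin n → MvPolynomial (Fin n) K),
      lbBracket (lbBracket x y) z
        = lbBracket (lbBracket x z) y + lbBracket x (lbBracket y z)) ∧
    (∀ x y z t : (Fin n → K) × (Fin n × Fin n → MvPolynomial (Fin n) K),
      lbBracket (lbBracket x y) (lbBracket z t) = 0) ∧
    (∀ (σ : Equiv.Perm (Fin n))
        (v w : (Fin n → K) × (Fin n × Fin n → MvPolynomial (Fin n) K)),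
      permAct σ (lbBracket v w) = lbBracket (permAct σ v) (permAct σ w)) ∧
    (∀ (σ : Equiv.Perm (Fin n))
        (v w : (Fin n → K) × (Fin n × Fin n → MvPolynomial (Fin n) K)),
      permAct σ (v + w) = permAct σ v + permAct σ w) ∧
    (∀ (σ : Equiv.Perm (Fin n)) (c : K)
        (v : (Fin n → K) × (Fin n × Fin n → MvPolynomial (Fin n) K)),
      permAct σ (c • v) = c • permAct σ v) ∧
    (∀ σ : Equiv.Perm (Fin n),
      Function.Bijective
        (permAct σ : (Fin n → K) × (Fin n × Fin n → MvPolynomial (Fin n) K) → _)) := by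
  open MetabelianLeibniz in
  exact ⟨lbBracket_add_right, lbBracket_smul_right, lbBracket_add_left, lbBracket_smul_left,
    lbBracket_leibniz, lbBracket_lbBracket_lbBracket, permAct_lbBracket, permAct_add,
    permAct_smul, permAct_bijective⟩

/-- The bracket on the concrete model `M_n` is `K`-bilinear, satisfies the
Leibniz identity and the metabelian identity, and every permutation
`σ ∈ Equiv.Perm (Fin n)` acts on `M_n` as a bracket-preserving `K`-linear
automorphism. -/
theorem model_is_metabelian_leibniz_with_symmetric_action
    {K : Type*} [Field K] [CharZero K] {n : ℕ} (hn : 2 ≤ n) :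
    (∀ v w w' : (Fin n → K) × (Fin n × Fin n → MvPolynomial (Fin n) K),
      lbBracket v (w + w') = lbBracket v w + lbBracket v w') ∧
    (∀ (c : K) (v w : (Fin n → K) × (Fin n × Fin n → MvPolynomial (Fin n) K)),
      lbBracket v (c • w) = c • lbBracket v w) ∧
    (∀ v v' w : (Fin n → K) × (Fin n × Fin n → MvPolynomial (Fin n) K),
      lbBracket (v + v') w = lbBracket v w + lbBracket v' w) ∧
    (∀ (c : K) (v w : (Fin n → K) × (Fin n × Fin n → MvPolynomial (Fin n) K)),
      lbBracket (c • v) w = c • lbBracket v w) ∧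
    (∀ x y z : (Fin n → K) × (Fin n × Fin n → MvPolynomial (Fin n) K),
      lbBracket (lbBracket x y) z
        = lbBracket (lbBracket x z) y + lbBracket x (lbBracket y z)) ∧
    (∀ x y z t : (Fin n → K) × (Fin n × Fin n → MvPolynomial (Fin n) K),
      lbBracket (lbBracket x y) (lbBracket z t) = 0) ∧
    (∀ (σ : Equiv.Perm (Fin n))
        (v w : (Fin n → K) × (Fin n × Fin n → MvPolynomial (Fin n) K)),
      permAct σ (lbBracket v w) = lbBracket (permAct σ v) (permAct σ w)) ∧
    (∀ (σ : Equiv.Perm (Fin n))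
        (v w : (Fin n → K) × (Fin n × Fin n → MvPolynomial (Fin n) K)),
      permAct σ (v + w) = permAct σ v + permAct σ w) ∧
    (∀ (σ : Equiv.Perm (Fin n)) (c : K)
        (v : (Fin n → K) × (Fin n × Fin n → MvPolynomial (Fin n) K)),
      permAct σ (c • v) = c • permAct σ v) ∧
    (∀ σ : Equiv.Perm (Fin n),
      Function.Bijective
        (permAct σ : (Fin n → K) × (Fin n × Fin n → MvPolynomial (Fin n) K) → _)) :=
  model_is_metabelian_leibniz_with_symmetric_action_general
end

section
/- An element (α,P) of the concrete model M_n is symmetric (fixed by every σ ∈ Equiv.Perm (Fin n)) if and only if α is a constant function and there exist polynomials f, g ∈ MvPolynomial (Fin n) K with rename π f = f for every permutation π fixing 0 and rename π g = g for every permutation π fixing both 0 and 1, such that P(i,i) = rename (Equiv.swap 0 i) f for every i, and P(i,j) = rename σ g for all i ≠ j and every permutation σ with σ(0) = i and σ(1) = j. -/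
/-! The permutation action sends `(α, P)` to `(α ∘ σ⁻¹, rename σ ∘ P ∘ (σ⁻¹ × σ⁻¹))`, so `(α, P)` is
symmetric iff `α` is constant and `P` is equivariant: `P (σ a, σ b) = rename σ (P (a, b))`.
The permutations act transitively on the diagonal and on the off-diagonal pairs, so an equivariant
`P` is determined by `f = P (0, 0)` and `g = P (0, 1)`, which are invariant under the respective
stabilisers; conversely, invariance of `f` under the stabiliser of `0` is exactly what makes
`P (i, i) = rename (swap 0 i) f` equivariant. -/

open MvPolynomial

open Equiv

theorem Equiv.Perm.exists_apply_eq_and_apply_eq {α : Type*} [DecidableEq α] {a b x y : α}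
    (hab : a ≠ b) (hxy : x ≠ y) : ∃ ρ : Perm α, ρ a = x ∧ ρ b = y := by
  set t := swap a x y
  have hta : t ≠ a := by simpa [t, swap_apply_eq_iff] using hxy.symm
  refine ⟨swap a x * swap b t, ?_, ?_⟩
  · simp [Perm.mul_apply, swap_apply_of_ne_of_ne hab hta.symm]
  · simp [Perm.mul_apply, t]

theorem Fin.exists_perm_zero_one {n : ℕ} [NeZero n] {x y : Fin n} (hxy : x ≠ y) :
    ∃ ρ : Perm (Fin n), ρ 0 = x ∧ ρ 1 = y := by
  have h01 : (0 : Fin n) ≠ 1 := by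
    have := Fin.nontrivial_iff_two_le.1 (nontrivial_of_ne x y hxy)
    simp only [ne_eq, Fin.ext_iff, Fin.coe_ofNat_eq_mod, Nat.zero_mod, Nat.zero_eq_one_mod_iff]
    omega
  exact Perm.exists_apply_eq_and_apply_eq h01 hxy

theorem forall_perm_apply_eq_iff {α β : Type*} [DecidableEq α] (c : α → β) :
    (∀ σ : Perm α, ∀ i, c (σ i) = c i) ↔ ∀ i j, c i = c j :=
  ⟨fun h i j => by simpa using (h (swap i j) i).symm, fun h _ _ => h _ _⟩

theorem rename_swap_eq_rename_rename_swap {α R : Type*} [DecidableEq α] [CommSemiring R]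
    {a₀ : α} {f : MvPolynomial α R} (hf : ∀ π : Perm α, π a₀ = a₀ → rename π f = f)
    (σ : Perm α) (a : α) :
    rename (swap a₀ (σ a)) f = rename σ (rename (swap a₀ a) f) := by
  have hπ : (swap a₀ (σ a) * σ * swap a₀ a) a₀ = a₀ := by simp
  calc rename (swap a₀ (σ a)) f
      = rename (swap a₀ (σ a)) (rename (swap a₀ (σ a) * σ * swap a₀ a) f) := by rw [hf _ hπ]
    _ = rename σ (rename (swap a₀ a) f) := by
      rw [rename_rename, rename_rename]
      congr 1
      ext x
      simp

theorem permAct_eq_self_iff {K : Type*} [Field K] {n : ℕ} (σ : Perm (Fin n))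
    (v : (Fin n → K) × (Fin n × Fin n → MvPolynomial (Fin n) K)) :
    permAct σ v = v ↔
      (∀ i, v.1 (σ i) = v.1 i) ∧ ∀ a b, v.2 (σ a, σ b) = rename σ (v.2 (a, b)) := by
  rw [permAct, Prod.ext_iff, funext_iff, funext_iff, Prod.forall, σ.surjective.forall,
    σ.surjective.forall₂]
  simp [eq_comm]

theorem model_symmetric_iff_general
    {K : Type*} [Field K] {n : ℕ} [NeZero n]
    (v : (Fin n → K) × (Fin n × Fin n → MvPolynomial (Fin n) K)) :
    (∀ σ : Equiv.Perm (Fin n), permAct σ v = v) ↔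
      ((∀ i j : Fin n, v.1 i = v.1 j) ∧
       ∃ f g : MvPolynomial (Fin n) K,
         (∀ π : Equiv.Perm (Fin n), π 0 = 0 → rename (⇑π) f = f) ∧
         (∀ π : Equiv.Perm (Fin n), π 0 = 0 → π 1 = 1 → rename (⇑π) g = g) ∧
         (∀ i : Fin n, v.2 (i, i) = rename (⇑(Equiv.swap 0 i)) f) ∧
         (∀ i j : Fin n, i ≠ j → ∀ σ : Equiv.Perm (Fin n), σ 0 = i → σ 1 = j →
           v.2 (i, j) = rename (⇑σ) g)) := by
  simp only [permAct_eq_self_iff, forall_and, forall_perm_apply_eq_iff]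
  refine and_congr_right fun _ => ⟨fun hP => ?_, ?_⟩
  · refine ⟨v.2 (0, 0), v.2 (0, 1), fun π h0 => ?_, fun π h0 h1 => ?_, fun i => ?_,
      fun i j _ σ h0 h1 => ?_⟩
    · simpa [h0] using (hP π 0 0).symm
    · simpa [h0, h1] using (hP π 0 1).symm
    · simpa using hP (swap 0 i) 0 0
    · simpa [h0, h1] using hP σ 0 1
  · rintro ⟨f, g, hf, -, hdiag, hoff⟩ σ a b
    obtain rfl | hab := eq_or_ne a b
    · rw [hdiag, hdiag, rename_swap_eq_rename_rename_swap hf]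
    · obtain ⟨ρ, h0, h1⟩ := Fin.exists_perm_zero_one hab
      rw [hoff a b hab ρ h0 h1, hoff _ _ (σ.injective.ne hab) (σ * ρ) (by simp [h0])
        (by simp [h1]), Perm.coe_mul, rename_rename]

/-- An element `(α, P)` of the concrete model `M_n` is symmetric (fixed by every
permutation of the variables) iff `α` is constant and there exist polynomials
`f, g`, with `f` invariant under permutations fixing `0` and `g` invariant under
permutations fixing `0` and `1`, such that `P(i,i) = rename (swap 0 i) f` for
every `i`, and `P(i,j) = rename σ g` for all `i ≠ j` and every `σ` with
`σ 0 = i`, `σ 1 = j`. -/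
theorem model_symmetric_iff
    {K : Type*} [Field K] [CharZero K] {n : ℕ} [NeZero n] (hn : 2 ≤ n)
    (v : (Fin n → K) × (Fin n × Fin n → MvPolynomial (Fin n) K)) :
    (∀ σ : Equiv.Perm (Fin n), permAct σ v = v) ↔
      ((∀ i j : Fin n, v.1 i = v.1 j) ∧
       ∃ f g : MvPolynomial (Fin n) K,
         (∀ π : Equiv.Perm (Fin n), π 0 = 0 → rename (⇑π) f = f) ∧
         (∀ π : Equiv.Perm (Fin n), π 0 = 0 → π 1 = 1 → rename (⇑π) g = g) ∧
         (∀ i : Fin n, v.2 (i, i) = rename (⇑(Equiv.swap 0 i)) f) ∧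
         (∀ i j : Fin n, i ≠ j → ∀ σ : Equiv.Perm (Fin n), σ 0 = i → σ 1 = j →
           v.2 (i, j) = rename (⇑σ) g)) :=
  model_symmetric_iff_general v
end

section
/- Let U : Fin n × Fin n → MvPolynomial (Fin n) K and let ψ_U : M_n → M_n be the inner automorphism ψ_U(v) = v + [v,(0,U)] of the concrete model M_n. Then ψ_U maps every symmetric element of M_n to a symmetric element if and only if U decomposes as U = U₁ + U₂ where Σ_k (U₁(t,k) − U₁(k,t))·X_k = 0 for every t ∈ Fin n (i.e., (0,U₁) lies in the annihilator Ann(L_n)) and rename σ (U₂(i,j)) = U₂(σ(i),σ(j)) for every σ ∈ Equiv.Perm (Fin n) and all i, j (i.e., (0,U₂) is a symmetric element of the commutator ideal). -/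
/-!
Write `S_U(t) = Σ_k (U(t,k) − U(k,t))·X_k`, so that `[v, (0,U)]` has entry `v₁(s)·S_U(t)`
at `(s,t)`. Since `ψ_U(v) − v = [v, (0,U)]` and permutations act by automorphisms, `ψ_U`
preserves symmetric elements iff `[v, (0, σ·U)] = [v, (0,U)]` for every symmetric `v`; testing
on `v = Σ_i x_i` shows this means `S_{σ·U} = S_U` for all `σ`. For such `U`, the average `Ū` of
the `σ·U` over the symmetric group (here characteristic zero is used) is symmetric with
`S_Ū = S_U`, so `U = (U − Ū) + Ū` with `U − Ū` in the annihilator.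
-/

open MvPolynomial

section SkewContraction

variable {R : Type*} [CommRing R] {ι : Type*} [Fintype ι]

noncomputable def skewContraction :
    (ι × ι → MvPolynomial ι R) →ₗ[R] ι → MvPolynomial ι R where
  toFun U t := ∑ k, (U (t, k) - U (k, t)) * X k
  map_add' U V := by
    funext t
    simp only [Pi.add_apply, ← Finset.sum_add_distrib]
    exact Finset.sum_congr rfl fun k _ => by ring
  map_smul' c U := by
    funext t
    simp only [Pi.smul_apply, RingHom.id_apply, Finset.smul_sum, ← smul_sub, smul_mul_assoc]

theorem skewContraction_apply (U : ι × ι → MvPolynomial ι R) (t : ι) :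
    skewContraction U t = ∑ k, (U (t, k) - U (k, t)) * X k :=
  rfl

end SkewContraction

section PermRename

variable {R : Type*} [CommRing R] {ι : Type*}

noncomputable def permRename (σ : Equiv.Perm ι) :
    (ι × ι → MvPolynomial ι R) →ₗ[R] ι × ι → MvPolynomial ι R :=
  LinearMap.pi fun p => (rename σ).toLinearMap ∘ₗ LinearMap.proj (σ⁻¹ p.1, σ⁻¹ p.2)

@[simp]
theorem permRename_apply (σ : Equiv.Perm ι) (U : ι × ι → MvPolynomial ι R) (p : ι × ι) :
    permRename σ U p = rename σ (U (σ⁻¹ p.1, σ⁻¹ p.2)) :=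
  rfl

theorem permRename_mul (σ τ : Equiv.Perm ι) (U : ι × ι → MvPolynomial ι R) :
    permRename (σ * τ) U = permRename σ (permRename τ U) := by
  funext p
  simp [rename_rename, mul_inv_rev]

theorem permRename_eq_self_iff (σ : Equiv.Perm ι) (U : ι × ι → MvPolynomial ι R) :
    permRename σ U = U ↔ ∀ i j, rename σ (U (i, j)) = U (σ i, σ j) := by
  refine ⟨fun h i j => by simpa using congrFun h (σ i, σ j), fun h => funext fun p => ?_⟩
  simpa using h (σ⁻¹ p.1) (σ⁻¹ p.2)

theorem skewContraction_permRename [Fintype ι] (σ : Equiv.Perm ι)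
    (U : ι × ι → MvPolynomial ι R) (t : ι) :
    skewContraction (permRename σ U) t = rename σ (skewContraction U (σ⁻¹ t)) := by
  simp only [skewContraction_apply, map_sum, map_mul, map_sub, rename_X]
  exact (Fintype.sum_equiv σ _ _ fun k => by simp).symm

end PermRename

section Symmetrize

variable {K : Type*} [Field K] {ι : Type*} [Fintype ι] [DecidableEq ι]

noncomputable def symmetrize (U : ι × ι → MvPolynomial ι K) : ι × ι → MvPolynomial ι K :=
  (Fintype.card (Equiv.Perm ι) : K)⁻¹ • ∑ σ : Equiv.Perm ι, permRename σ U

theorem permRename_symmetrize (τ : Equiv.Perm ι) (U : ι × ι → MvPolynomial ι K) :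
    permRename τ (symmetrize U) = symmetrize U := by
  simp only [symmetrize, map_smul, map_sum, ← permRename_mul]
  congr 1
  exact Fintype.sum_equiv (Equiv.mulLeft τ) _ _ fun σ => rfl

theorem skewContraction_symmetrize [CharZero K] {U : ι × ι → MvPolynomial ι K}
    (hU : ∀ σ : Equiv.Perm ι, skewContraction (permRename σ U) = skewContraction U) :
    skewContraction (symmetrize U) = skewContraction U := by
  have hcard : (Fintype.card (Equiv.Perm ι) : K) ≠ 0 := Nat.cast_ne_zero.mpr Fintype.card_ne_zero
  simp only [symmetrize, map_smul, map_sum, hU, Finset.sum_const, Finset.card_univ,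
    ← Nat.cast_smul_eq_nsmul K, smul_smul, inv_mul_cancel₀ hcard, one_smul]

theorem skewContraction_permRename_eq_iff_exists_add [CharZero K]
    (U : ι × ι → MvPolynomial ι K) :
    (∀ σ : Equiv.Perm ι, skewContraction (permRename σ U) = skewContraction U) ↔
      ∃ U₁ U₂ : ι × ι → MvPolynomial ι K, U = U₁ + U₂ ∧ skewContraction U₁ = 0 ∧
        ∀ σ : Equiv.Perm ι, permRename σ U₂ = U₂ := by
  constructor
  · intro hU
    refine ⟨U - symmetrize U, symmetrize U, (sub_add_cancel _ _).symm, ?_,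
      fun σ => permRename_symmetrize σ U⟩
    rw [map_sub, skewContraction_symmetrize hU, sub_self]
  · rintro ⟨U₁, U₂, rfl, h₁, h₂⟩ σ
    have hσ₁ : skewContraction (permRename σ U₁) = 0 := by
      funext t
      rw [skewContraction_permRename, h₁, Pi.zero_apply, map_zero, Pi.zero_apply]
    rw [map_add, map_add, map_add, hσ₁, h₂, h₁]

end Symmetrize

section Model

variable {K : Type*} [Field K] {n : ℕ}

theorem permAct_add (σ : Equiv.Perm (Fin n))
    (v w : (Fin n → K) × (Fin n × Fin n → MvPolynomial (Fin n) K)) :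
    permAct σ (v + w) = permAct σ v + permAct σ w := by
  ext p <;> simp [permAct]

theorem permAct_zero_fst (σ : Equiv.Perm (Fin n)) (U : Fin n × Fin n → MvPolynomial (Fin n) K) :
    permAct σ (0, U) = (0, permRename σ U) :=
  rfl

theorem lbBracket_zero_fst (v : (Fin n → K) × (Fin n × Fin n → MvPolynomial (Fin n) K))
    (U : Fin n × Fin n → MvPolynomial (Fin n) K) :
    lbBracket v (0, U) = (0, fun p => C (v.1 p.1) * skewContraction U p.2) := by
  ext p <;> simp [lbBracket, skewContraction_apply]

theorem permAct_lbBracket (σ : Equiv.Perm (Fin n))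
    (v w : (Fin n → K) × (Fin n × Fin n → MvPolynomial (Fin n) K)) :
    permAct σ (lbBracket v w) = lbBracket (permAct σ v) (permAct σ w) := by
  have reindex : ∀ f : Fin n → MvPolynomial (Fin n) K,
      ∑ k, f k * X (σ k) = ∑ k, f (σ⁻¹ k) * X k :=
    fun f => Fintype.sum_equiv σ _ _ fun k => by simp
  refine Prod.ext (by simp [permAct, lbBracket]) (funext fun p => ?_)
  simp only [permAct, lbBracket, map_add, map_mul, rename_C, map_sum, map_sub, rename_X,
    Function.comp_apply, reindex]

theorem forall_permAct_add_lbBracket_iff (U : Fin n × Fin n → MvPolynomial (Fin n) K) :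
    (∀ v : (Fin n → K) × (Fin n × Fin n → MvPolynomial (Fin n) K),
        (∀ σ : Equiv.Perm (Fin n), permAct σ v = v) →
        ∀ σ : Equiv.Perm (Fin n),
          permAct σ (v + lbBracket v (0, U)) = v + lbBracket v (0, U)) ↔
      ∀ σ : Equiv.Perm (Fin n), skewContraction (permRename σ U) = skewContraction U := by
  have reduce : ∀ v : (Fin n → K) × (Fin n × Fin n → MvPolynomial (Fin n) K),
      (∀ σ : Equiv.Perm (Fin n), permAct σ v = v) → ∀ σ : Equiv.Perm (Fin n),
        permAct σ (v + lbBracket v (0, U)) = v + lbBracket v (0, U) ↔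
          ∀ p : Fin n × Fin n, C (v.1 p.1) * skewContraction (permRename σ U) p.2 =
            C (v.1 p.1) * skewContraction U p.2 := by
    intro v hv σ
    rw [permAct_add, permAct_lbBracket, permAct_zero_fst, hv, add_right_inj,
      lbBracket_zero_fst, lbBracket_zero_fst]
    simp only [Prod.mk.injEq, true_and, funext_iff]
  constructor
  · intro h σ
    have hsym : ∀ τ : Equiv.Perm (Fin n),
        permAct τ ((1 : Fin n → K), (0 : Fin n × Fin n → MvPolynomial (Fin n) K)) = (1, 0) :=
      fun τ => by ext p <;> simp [permAct]
    funext t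
    simpa using (reduce _ hsym σ).1 (h _ hsym σ) (t, t)
  · intro h v hv σ
    exact (reduce v hv σ).2 fun p => by rw [h]

end Model

theorem model_inner_automorphism_preserves_symmetric_iff_general
    {K : Type*} [Field K] [CharZero K] {n : ℕ}
    (U : Fin n × Fin n → MvPolynomial (Fin n) K) :
    (∀ v : (Fin n → K) × (Fin n × Fin n → MvPolynomial (Fin n) K),
        (∀ σ : Equiv.Perm (Fin n), permAct σ v = v) →
        (∀ σ : Equiv.Perm (Fin n),
          permAct σ (v + lbBracket v (0, U)) = v + lbBracket v (0, U))) ↔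
      (∃ U₁ U₂ : Fin n × Fin n → MvPolynomial (Fin n) K,
        U = U₁ + U₂ ∧
        (∀ t : Fin n, ∑ k, (U₁ (t, k) - U₁ (k, t)) * X k = 0) ∧
        (∀ (σ : Equiv.Perm (Fin n)) (i j : Fin n),
          rename (⇑σ) (U₂ (i, j)) = U₂ (σ i, σ j))) := by
  rw [forall_permAct_add_lbBracket_iff, skewContraction_permRename_eq_iff_exists_add]
  refine exists₂_congr fun U₁ U₂ => and_congr_right' (and_congr funext_iff ?_)
  exact forall_congr' fun σ => permRename_eq_self_iff σ U₂

/-- The inner automorphism `ψ_U : v ↦ v + [v, (0,U)]` of the concrete model `M_n`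
maps every symmetric element to a symmetric element iff `U = U₁ + U₂` where
`(0, U₁)` lies in the annihilator (i.e. `Σ_k (U₁(t,k) − U₁(k,t))·X_k = 0` for
every `t`) and `(0, U₂)` is a symmetric element of the commutator ideal (i.e.
`rename σ (U₂(i,j)) = U₂(σ i, σ j)` for every `σ` and all `i, j`). -/
theorem model_inner_automorphism_preserves_symmetric_iff
    {K : Type*} [Field K] [CharZero K] {n : ℕ} [NeZero n] (hn : 2 ≤ n)
    (U : Fin n × Fin n → MvPolynomial (Fin n) K) :
    (∀ v : (Fin n → K) × (Fin n × Fin n → MvPolynomial (Fin n) K),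
        (∀ σ : Equiv.Perm (Fin n), permAct σ v = v) →
        (∀ σ : Equiv.Perm (Fin n),
          permAct σ (v + lbBracket v (0, U)) = v + lbBracket v (0, U))) ↔
      (∃ U₁ U₂ : Fin n × Fin n → MvPolynomial (Fin n) K,
        U = U₁ + U₂ ∧
        (∀ t : Fin n, ∑ k, (U₁ (t, k) - U₁ (k, t)) * X k = 0) ∧
        (∀ (σ : Equiv.Perm (Fin n)) (i j : Fin n),
          rename (⇑σ) (U₂ (i, j)) = U₂ (σ i, σ j))) :=
  model_inner_automorphism_preserves_symmetric_iff_general U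
end
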